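/- Let b ≥ 0 and let m1, m0 : ℝ → ℝ satisfy the smoothness assumption with constant b on [0,1]. Let 0 ≤ p' < p ≤ 1 and set ΔY := ∫_{p'}^{p} (m1(v) − m0(v)) dv. Then ∫_0^1 (m1(v) − m0(v)) dv ≥ ΔY/(p − p') − (2b/3)·(p³ − p'³)/(p − p') + b·(p² − p'²)/(p − p') − b. -/

import Mathlib

/-!
The contrast `g = m1 - m0` is `2b`-Lipschitz on `[0,1]`, so for `u ∈ [p', p]` and `v ∈ [0,1]`,
`g u ≤ g v + 2b |u - v|`. Averaging over `v ∈ [0,1]` gives `g u ≤ ATE + b (u² + (1 - u)²)`,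
and integrating this over `u ∈ [p', p]` gives `ΔY ≤ (p - p') ATE + b ∫_{p'}^{p} (u² + (1 - u)²) du`,
which is the claim after dividing by `p - p'`.
-/

open MeasureTheory intervalIntegral Set

theorem integral_abs_sub_of_mem_Icc {a c u : ℝ} (hu : u ∈ Icc a c) :
    ∫ v in a..c, |u - v| = ((u - a) ^ 2 + (c - u) ^ 2) / 2 := by
  have hint : ∀ x y : ℝ, IntervalIntegrable (fun v => |u - v|) volume x y :=
    fun x y => (continuous_const.sub continuous_id).abs.intervalIntegrable x y
  have left : ∫ v in a..u, |u - v| = ∫ v in a..u, (u - v) :=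
    integral_congr fun v hv => abs_of_nonneg <| by
      rw [uIcc_of_le hu.1] at hv; linarith [hv.2]
  have right : ∫ v in u..c, |u - v| = ∫ v in u..c, (v - u) :=
    integral_congr fun v hv => by
      rw [uIcc_of_le hu.2] at hv; rw [abs_sub_comm]; exact abs_of_nonneg (by linarith [hv.1])
  rw [← integral_add_adjacent_intervals (hint a u) (hint u c), left, right,
    integral_sub intervalIntegrable_const intervalIntegrable_id,
    integral_sub intervalIntegrable_id intervalIntegrable_const]
  simp only [intervalIntegral.integral_const, integral_id, smul_eq_mul]
  ring

theorem LipschitzOnWith.mul_le_integral_add {K : NNReal} {g : ℝ → ℝ} {a c u : ℝ}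
    (hg : LipschitzOnWith K g (Icc a c)) (hu : u ∈ Icc a c) :
    (c - a) * g u ≤ (∫ v in a..c, g v) + K * (((u - a) ^ 2 + (c - u) ^ 2) / 2) := by
  have hac : a ≤ c := hu.1.trans hu.2
  have hpt : ∀ v ∈ Icc a c, g u ≤ g v + K * |u - v| := fun v hv => by
    have := hg.dist_le_mul u hu v hv
    rw [Real.dist_eq, Real.dist_eq] at this
    linarith [le_abs_self (g u - g v)]
  have hg_int : IntervalIntegrable g volume a c :=
    hg.continuousOn.intervalIntegrable_of_Icc hac
  have hdist_int : IntervalIntegrable (fun v => K * |u - v|) volume a c :=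
    (continuous_const.mul (continuous_const.sub continuous_id).abs).intervalIntegrable _ _
  calc (c - a) * g u = ∫ _ in a..c, g u := by simp
    _ ≤ ∫ v in a..c, (g v + K * |u - v|) :=
        integral_mono_on hac intervalIntegrable_const (hg_int.add hdist_int) hpt
    _ = _ := by
        rw [integral_add hg_int hdist_int, intervalIntegral.integral_const_mul,
          integral_abs_sub_of_mem_Icc hu]

theorem integral_sq_add_one_sub_sq (a c : ℝ) :
    ∫ u in a..c, (u ^ 2 + (1 - u) ^ 2) = 2 / 3 * (c ^ 3 - a ^ 3) - (c ^ 2 - a ^ 2) + (c - a) := by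
  rw [integral_add (g := fun u => (1 - u) ^ 2) (Continuous.intervalIntegrable (by fun_prop) _ _)
      (Continuous.intervalIntegrable (by fun_prop) _ _),
    integral_comp_sub_left (fun u => u ^ 2), integral_pow, integral_pow]
  ring

theorem lipschitzOnWith_toNNReal_of_abs_sub_le {b : ℝ} (hb : 0 ≤ b) {f : ℝ → ℝ} {s : Set ℝ}
    (hf : ∀ x ∈ s, ∀ y ∈ s, |f x - f y| ≤ b * |x - y|) : LipschitzOnWith b.toNNReal f s :=
  LipschitzOnWith.of_dist_le_mul fun x hx y hy => by
    simpa only [Real.dist_eq, Real.coe_toNNReal b hb] using hf x hx y hy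

/-- Lower bound on the ATE without misreporting under the smoothness assumption:
`ATE ≥ ΔY/(p - p') - (2b/3)(p³ - p'³)/(p - p') + b(p² - p'²)/(p - p') - b`. -/
theorem ate_lower_bound_no_misreporting
    (b : ℝ) (hb : 0 ≤ b) (m1 m0 : ℝ → ℝ)
    (hm1 : ∀ v1 ∈ Set.Icc (0:ℝ) 1, ∀ v2 ∈ Set.Icc (0:ℝ) 1, |m1 v1 - m1 v2| ≤ b * |v1 - v2|)
    (hm0 : ∀ v1 ∈ Set.Icc (0:ℝ) 1, ∀ v2 ∈ Set.Icc (0:ℝ) 1, |m0 v1 - m0 v2| ≤ b * |v1 - v2|)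
    (p' p : ℝ) (hp' : 0 ≤ p') (hpp : p' < p) (hp : p ≤ 1)
    (ΔY : ℝ) (hΔY : ΔY = ∫ v in p'..p, (m1 v - m0 v)) :
    (∫ v in (0:ℝ)..1, (m1 v - m0 v)) ≥
      ΔY / (p - p') - (2 * b / 3) * (p ^ 3 - p' ^ 3) / (p - p')
        + b * (p ^ 2 - p' ^ 2) / (p - p') - b := by
  set ate := ∫ v in (0:ℝ)..1, (m1 v - m0 v)
  have hlip : LipschitzOnWith (b.toNNReal + b.toNNReal) (fun v => m1 v - m0 v) (Icc 0 1) :=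
    (lipschitzOnWith_toNNReal_of_abs_sub_le hb hm1).sub
      (lipschitzOnWith_toNNReal_of_abs_sub_le hb hm0)
  have hsub : Icc p' p ⊆ Icc 0 1 := Icc_subset_Icc hp' hp
  have hpoint : ∀ u ∈ Icc p' p, m1 u - m0 u ≤ ate + b * (u ^ 2 + (1 - u) ^ 2) := fun u hu => by
    have := hlip.mul_le_integral_add (hsub hu)
    rw [NNReal.coe_add, Real.coe_toNNReal b hb] at this
    linarith
  have hΔY_le :
      ΔY ≤ (p - p') * ate + b * (2 / 3 * (p ^ 3 - p' ^ 3) - (p ^ 2 - p' ^ 2) + (p - p')) :=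
    calc ΔY ≤ ∫ u in p'..p, (ate + b * (u ^ 2 + (1 - u) ^ 2)) :=
          hΔY ▸ integral_mono_on hpp.le
            ((hlip.continuousOn.mono hsub).intervalIntegrable_of_Icc hpp.le)
            (Continuous.intervalIntegrable (by fun_prop) _ _) hpoint
      _ = _ := by
          rw [integral_add intervalIntegrable_const
              (Continuous.intervalIntegrable (by fun_prop) _ _),
            intervalIntegral.integral_const, intervalIntegral.integral_const_mul,
            integral_sq_add_one_sub_sq, smul_eq_mul]
  have hq : 0 < p - p' := sub_pos.2 hpp
  rw [ge_iff_le, show ΔY / (p - p') - 2 * b / 3 * (p ^ 3 - p' ^ 3) / (p - p')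
      + b * (p ^ 2 - p' ^ 2) / (p - p') - b
      = (ΔY - b * (2 / 3 * (p ^ 3 - p' ^ 3) - (p ^ 2 - p' ^ 2) + (p - p'))) / (p - p') by
    field_simp; ring, div_le_iff₀ hq]
  linarith
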